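/- arXiv:1103.0565 — 4 statements merged into one kernel-verified Lean document; each statement's English description precedes it below -/
import Mathlib

section
/- Let X be a scheme, x ∈ X a point, M a coherent O_X-module flat over a base S at x with s the image of x, and α : O_X → M a homomorphism such that α_x ⊗ k(s) is bijective. Then α is an isomorphism in a neighborhood of x. -/
/-!
Here `R = O_{S,s}`, `A = O_{X,x}` and `M = M_x`. Since `𝔪_R A ⊆ 𝔪_A`, surjectivity of `α` modulo
`𝔪_R A` lifts to surjectivity of `α` by Nakayama. Injectivity modulo `𝔪_R A` puts the kernel `K`
inside `𝔪_R A`, and flatness of `M` over `R` (i.e. `Tor₁^R(k(s), M) = 0`) gives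
`K ∩ 𝔪_R A = 𝔪_R K`; hence `K = 𝔪_R K`, and `K = 0` by Nakayama again, `K` being finitely
generated as `A` is noetherian.
-/

open IsLocalRing

namespace Submodule

variable {R N M : Type*} [CommRing R] [AddCommGroup N] [Module R N] [AddCommGroup M] [Module R M]

theorem surjective_of_surjective_mapQ_smul_top [Module.Finite R M] {I : Ideal R}
    (hI : I ≤ Ideal.jacobson ⊥) (p : Submodule R N) (f : N →ₗ[R] M)
    (h : p ≤ (I • ⊤ : Submodule R M).comap f) (hf : Function.Surjective (p.mapQ (I • ⊤) f h)) :
    Function.Surjective f := by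
  have hsup : ⊤ ≤ LinearMap.range f ⊔ I • ⊤ := by
    intro m _
    obtain ⟨y, hy⟩ := hf (Quotient.mk m)
    obtain ⟨n, rfl⟩ := Quotient.mk_surjective _ y
    rw [mapQ_apply, Quotient.eq] at hy
    exact mem_sup.2 ⟨f n, ⟨n, rfl⟩, -(f n - m), neg_mem hy, by abel⟩
  exact LinearMap.range_eq_top.mp
    (top_le_iff.mp (le_of_le_smul_of_le_jacobson_bot Module.Finite.fg_top hI hsup))

theorem ker_le_of_injective_mapQ (p : Submodule R N) (q : Submodule R M) (f : N →ₗ[R] M)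
    (h : p ≤ q.comap f) (hf : Function.Injective (p.mapQ q f h)) : LinearMap.ker f ≤ p := by
  intro x hx
  rw [← Quotient.mk_eq_zero, ← hf.eq_iff, mapQ_apply, map_zero, hx, Quotient.mk_zero]

end Submodule

theorem LinearMap.ker_inf_map_smul_top_eq_map_smul_of_flat {R A N M : Type*} [CommRing R]
    [CommRing A] [Algebra R A] [AddCommGroup N] [Module A N] [Module R N] [IsScalarTower R A N]
    [AddCommGroup M] [Module A M] [Module R M] [IsScalarTower R A M] [Module.Flat R M]
    (J : Ideal R) {f : N →ₗ[A] M} (hf : Function.Surjective f) :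
    LinearMap.ker f ⊓ J.map (algebraMap R A) • ⊤ = J.map (algebraMap R A) • LinearMap.ker f := by
  rw [← Submodule.restrictScalars_inj R, Submodule.restrictScalars_inf,
    Ideal.smul_restrictScalars, Ideal.smul_restrictScalars]
  exact LinearMap.ker_inf_smul_top_eq_smul_of_flat J (f.restrictScalars R) hf

theorem stalk_iso_of_fiberwise_iso_general
    (R A : Type*) [CommRing R] [CommRing A]
    [IsLocalRing R] [IsLocalRing A]
    [IsNoetherianRing A]
    [Algebra R A] [IsLocalHom (algebraMap R A)]
    (M : Type*) [AddCommGroup M] [Module A M] [Module R M] [IsScalarTower R A M]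
    [Module.Finite A M] [Module.Flat R M]
    (α : A →ₗ[A] M)
    -- the ideal `𝔪_R · A` of `A`
    (I : Ideal A) (hI : I = (maximalIdeal R).map (algebraMap R A))
    (hcomp : I ≤ (I • (⊤ : Submodule A M)).comap α)
    -- `α ⊗ k(s) : A/𝔪_R A → M/𝔪_R M` is bijective
    (hfib : Function.Bijective
      (Submodule.mapQ (I : Submodule A A) (I • (⊤ : Submodule A M)) α hcomp)) :
    Function.Bijective α := by
  have hIjac : I ≤ Ideal.jacobson ⊥ :=
    hI ▸ (map_maximalIdeal_le _).trans (maximalIdeal_le_jacobson ⊥)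
  have hsurj : Function.Surjective α :=
    Submodule.surjective_of_surjective_mapQ_smul_top hIjac _ α hcomp hfib.2
  have hker_le : LinearMap.ker α ≤ I := Submodule.ker_le_of_injective_mapQ _ _ α hcomp hfib.1
  have hker_inf : LinearMap.ker α ⊓ I = I • LinearMap.ker α := by
    simpa only [← hI, Ideal.smul_eq_mul, Ideal.mul_top] using
      LinearMap.ker_inf_map_smul_top_eq_map_smul_of_flat (maximalIdeal R) hsurj
  have hker_smul : LinearMap.ker α ≤ I • LinearMap.ker α := by
    rw [← hker_inf]
    exact le_inf le_rfl hker_le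
  refine ⟨LinearMap.ker_eq_bot.mp ?_, hsurj⟩
  exact Submodule.eq_bot_of_le_smul_of_le_jacobson_bot I _ (IsNoetherian.noetherian _)
    hker_smul hIjac

theorem stalk_iso_of_fiberwise_iso
    (R A : Type*) [CommRing R] [CommRing A]
    [IsLocalRing R] [IsLocalRing A]
    [IsNoetherianRing R] [IsNoetherianRing A]
    [Algebra R A] [IsLocalHom (algebraMap R A)]
    (M : Type*) [AddCommGroup M] [Module A M] [Module R M] [IsScalarTower R A M]
    [Module.Finite A M] [Module.Flat R M]
    (α : A →ₗ[A] M)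
    -- the ideal `𝔪_R · A` of `A`
    (I : Ideal A) (hI : I = (maximalIdeal R).map (algebraMap R A))
    (hcomp : I ≤ (I • (⊤ : Submodule A M)).comap α)
    -- `α ⊗ k(s) : A/𝔪_R A → M/𝔪_R M` is bijective
    (hfib : Function.Bijective
      (Submodule.mapQ (I : Submodule A A) (I • (⊤ : Submodule A M)) α hcomp)) :
    Function.Bijective α :=
  stalk_iso_of_fiberwise_iso_general R A M α I hI hcomp hfib
end

section
/- Let X be a noetherian scheme over a discrete valuation ring with closed fiber X_t, let M be a coherent O_X-module flat over the DVR, and let z ∈ X be a point of the closed fiber which is not an associated point of M ⊗ k(t). Then depth(M_z) ≥ 2. -/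
/-!
Flatness over the DVR `R` makes a uniformizer `ϖ` regular on `M`, and `M ⧸ ϖM` is the closed
fiber. Since the maximal ideal of `A` is not an associated prime of the fiber, prime avoidance
over its finitely many associated primes yields `b ∈ 𝔪_A` regular on `M ⧸ ϖM`; so `ϖ, b` is an
`M`-regular sequence in `𝔪_A`.
-/

open IsLocalRing Pointwise

lemma exists_mem_maximalIdeal_isSMulRegular_of_not_isAssociatedPrime
    {A N : Type*} [CommRing A] [IsLocalRing A] [IsNoetherianRing A]
    [AddCommGroup N] [Module A N] [Module.Finite A N]
    (h : ¬ IsAssociatedPrime (maximalIdeal A) N) :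
    ∃ b ∈ maximalIdeal A, IsSMulRegular N b := by
  by_contra! hzd
  have hcover : (maximalIdeal A : Set A) ⊆ ⋃ p ∈ associatedPrimes A N, (p : Set A) :=
    biUnion_associatedPrimes_eq_compl_regular A N ▸ hzd
  obtain ⟨p, hp, hle⟩ := (Ideal.subset_union_prime_finite (associatedPrimes.finite A N)
    (f := id) ⊥ ⊥ fun p hp _ _ ↦ hp.isPrime).mp hcover
  exact h (le_antisymm (le_maximalIdeal hp.isPrime.ne_top) hle ▸ hp)

lemma Irreducible.map_maximalIdeal_smul_top {R A M : Type*} [CommRing R] [IsDomain R]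
    [IsDiscreteValuationRing R] [CommRing A] [Algebra R A] [AddCommGroup M] [Module A M]
    {ϖ : R} (hϖ : Irreducible ϖ) :
    (maximalIdeal R).map (algebraMap R A) • (⊤ : Submodule A M) = algebraMap R A ϖ • ⊤ := by
  rw [hϖ.maximalIdeal_eq, Ideal.map_span, Set.image_singleton,
    Submodule.ideal_span_singleton_smul]

theorem depth_ge_two_of_flat_of_not_associated
    (R A : Type*) [CommRing R] [IsDomain R] [IsDiscreteValuationRing R]
    [CommRing A] [IsLocalRing A] [IsNoetherianRing A]
    [Algebra R A] [IsLocalHom (algebraMap R A)]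
    (M : Type*) [AddCommGroup M] [Module A M] [Module R M] [IsScalarTower R A M]
    [Module.Finite A M] [Module.Flat R M]
    (hz : ¬ IsAssociatedPrime (maximalIdeal A)
      (M ⧸ (((maximalIdeal R).map (algebraMap R A)) • (⊤ : Submodule A M)))) :
    ∃ a b : A, a ∈ maximalIdeal A ∧ b ∈ maximalIdeal A ∧
      RingTheory.Sequence.IsWeaklyRegular M [a, b] := by
  obtain ⟨ϖ, hϖ⟩ := IsDiscreteValuationRing.exists_irreducible R
  have hϖ_mem : algebraMap R A ϖ ∈ maximalIdeal A :=
    map_nonunit _ ϖ ((mem_maximalIdeal ϖ).mpr hϖ.not_isUnit)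
  have hϖ_reg : IsSMulRegular M (algebraMap R A ϖ) := (isSMulRegular_algebraMap_iff A).mpr <|
    Module.Flat.isSMulRegular_of_isRegular (IsRegular.of_ne_zero hϖ.ne_zero)
  rw [hϖ.map_maximalIdeal_smul_top] at hz
  obtain ⟨b, hb_mem, hb_reg⟩ := exists_mem_maximalIdeal_isSMulRegular_of_not_isAssociatedPrime hz
  exact ⟨_, b, hϖ_mem, hb_mem, .cons hϖ_reg (.cons hb_reg (.nil A _))⟩
end

section
/- Let S be a trait (spectrum of a DVR) with fraction field K, and X a scheme locally of finite type and flat over S. Then the associated points of X coincide with the associated points of the generic fiber X_K. In particular X is reduced (resp. integral) if and only if X_K is reduced (resp. integral). -/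
/-!
Flatness over `R` makes `ϖ` a nonzerodivisor of `A`, and the generic fibre is the localization
`A[1/ϖ]`. For a localization at nonzerodivisors, the contraction of `Ann(a/s)` is `Ann(a)`, so
contraction maps associated primes to associated primes; conversely an associated prime contains
no nonzerodivisor, hence survives in the localization. Reducedness and integrality pass along
the injective map `A → A[1/ϖ]` and are preserved by localization.
-/

open IsLocalization Submodule Module.associatedPrimes
open scoped nonZeroDivisors

theorem IsAssociatedPrime.notMem_of_isSMulRegular {R M : Type*} [CommRing R] [AddCommGroup M]
    [Module R M] {I : Ideal R} (h : IsAssociatedPrime I M) {r : R} (hr : IsSMulRegular M r) :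
    r ∉ I := by
  obtain ⟨hI, x, rfl⟩ := h
  rintro ⟨n, hn⟩
  have hx : x = 0 := (hr.pow n).right_eq_zero_of_smul (mem_colon_singleton.mp hn)
  apply hI.ne_top
  simp [hx]

theorem Module.Flat.algebraMap_mem_nonZeroDivisors {R A : Type*} [CommRing R] [CommRing A]
    [Algebra R A] [Module.Flat R A] {r : R} (hr : r ∈ R⁰) : algebraMap R A r ∈ A⁰ :=
  isRegular_iff_mem_nonZeroDivisors.mp <| isLeftRegular_iff_isRegular.mp <|
    isLeftRegular_iff.mpr (Module.Flat.isSMulRegular_of_nonZeroDivisors hr).of_flat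

namespace IsLocalization

variable {A L : Type*} [CommRing A] [CommRing L] [Algebra A L] {M : Submonoid A}
  [IsLocalization M L]

theorem comap_colon_bot_mk' (hM : M ≤ A⁰) (a : A) (s : M) :
    ((⊥ : Submodule L L).colon {mk' L a s}).comap (algebraMap A L) =
      (⊥ : Submodule A A).colon {a} := by
  ext b
  rw [Ideal.mem_comap, mem_colon_singleton, mem_colon_singleton, mem_bot, mem_bot, smul_eq_mul,
    smul_eq_mul, ← mk'_one (M := M) L b, ← mk'_mul, one_mul, mk'_eq_zero_iff]
  exact ⟨fun ⟨m, hm⟩ ↦ (mul_left_mem_nonZeroDivisors_eq_zero_iff (hM m.2)).mp hm,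
    fun h ↦ ⟨1, by rw [h, mul_zero]⟩⟩

theorem comap_mem_associatedPrimes (hM : M ≤ A⁰) {p : Ideal L}
    (hp : p ∈ associatedPrimes L L) : p.comap (algebraMap A L) ∈ associatedPrimes A A := by
  obtain ⟨_, x, rfl⟩ := hp
  obtain ⟨a, s, rfl⟩ := exists_mk'_eq M x
  have key : ((⊥ : Submodule L L).colon {mk' L a s}).radical.comap (algebraMap A L) =
      ((⊥ : Submodule A A).colon {a}).radical := by
    rw [Ideal.comap_radical, comap_colon_bot_mk' hM]
  exact ⟨key ▸ Ideal.comap_isPrime _ _, a, key⟩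

theorem bijOn_comap_associatedPrimes (hM : M ≤ A⁰) :
    Set.BijOn (Ideal.comap (algebraMap A L)) (associatedPrimes L L) (associatedPrimes A A) := by
  refine ⟨fun _ ↦ comap_mem_associatedPrimes hM, fun p₁ _ p₂ _ h ↦ ?_, fun q hq ↦ ?_⟩
  · rw [← map_under M L p₁, ← map_under M L p₂]
    exact congrArg _ h
  · have hdisj : Disjoint (M : Set A) q := Set.disjoint_left.mpr fun m hm ↦
      hq.notMem_of_isSMulRegular <|
        isLeftRegular_iff.mp (isRegular_iff_mem_nonZeroDivisors.mpr (hM hm)).left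
    have hcomap : (q.map (algebraMap A L)).comap (algebraMap A L) = q :=
      under_map_of_isPrime_disjoint M L hq.isPrime hdisj
    refine ⟨q.map (algebraMap A L), ?_, hcomap⟩
    exact mem_associatedPrimes_of_comap_mem_associatedPrimes_of_isLocalizedModule M
      (Algebra.linearMap A L) _ (by rwa [hcomap])

theorem isReduced_iff (hM : M ≤ A⁰) : IsReduced A ↔ IsReduced L :=
  ⟨fun _ ↦ isReduced_of_injective _ (algEquiv M L (Localization M)).injective,
    fun _ ↦ isReduced_of_injective _ (IsLocalization.injective L hM)⟩

theorem isDomain_iff (hM : M ≤ A⁰) : IsDomain A ↔ IsDomain L :=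
  ⟨fun _ ↦ isDomain_of_le_nonZeroDivisors L hM,
    fun _ ↦ (IsLocalization.injective L hM).isDomain _⟩

end IsLocalization

theorem associated_points_eq_associated_points_of_generic_fiber_general
    (R : Type) [CommRing R] [IsDomain R]
    (ϖ : R) (hϖ : Irreducible ϖ)
    (A : Type) [CommRing A] [Algebra R A] [Module.Flat R A] :
    Set.BijOn (Ideal.comap (algebraMap A (Localization.Away (algebraMap R A ϖ))))
        (associatedPrimes (Localization.Away (algebraMap R A ϖ))
          (Localization.Away (algebraMap R A ϖ)))
        (associatedPrimes A A) ∧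
      (IsReduced A ↔ IsReduced (Localization.Away (algebraMap R A ϖ))) ∧
      (IsDomain A ↔ IsDomain (Localization.Away (algebraMap R A ϖ))) := by
  have hpowers : Submonoid.powers (algebraMap R A ϖ) ≤ A⁰ := Submonoid.powers_le.mpr <|
    Module.Flat.algebraMap_mem_nonZeroDivisors (mem_nonZeroDivisors_of_ne_zero hϖ.ne_zero)
  exact ⟨IsLocalization.bijOn_comap_associatedPrimes hpowers,
    IsLocalization.isReduced_iff hpowers, IsLocalization.isDomain_iff hpowers⟩

theorem associated_points_eq_associated_points_of_generic_fiber
    (R : Type) [CommRing R] [IsDomain R] [IsDiscreteValuationRing R]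
    (ϖ : R) (hϖ : Irreducible ϖ)
    (A : Type) [CommRing A] [Algebra R A] [Algebra.FiniteType R A] [Module.Flat R A] :
    Set.BijOn (Ideal.comap (algebraMap A (Localization.Away (algebraMap R A ϖ))))
        (associatedPrimes (Localization.Away (algebraMap R A ϖ))
          (Localization.Away (algebraMap R A ϖ)))
        (associatedPrimes A A) ∧
      (IsReduced A ↔ IsReduced (Localization.Away (algebraMap R A ϖ))) ∧
      (IsDomain A ↔ IsDomain (Localization.Away (algebraMap R A ϖ))) :=
  associated_points_eq_associated_points_of_generic_fiber_general R ϖ hϖ A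
end

section
/- Let S be a locally noetherian scheme, U ⊆ S a schematically dense open, and S' → S a U-admissible blow-up. Then the preimage U' of U in S' is schematically dense in S'. -/
/-!
STATEMENT 11: Let `S` be a locally noetherian scheme, `U ⊆ S` a schematically dense open,
and `S' → S` a `U`-admissible blow-up. Then the preimage `U'` of `U` in `S'` is
schematically dense in `S'`.

An open `U` of a scheme `S` is schematically dense iff the open immersion `U → S` is
schematically dominant, i.e. for every open `V` of `S` the restriction map
`O_S(V) → O_S(V ⊓ U)` is injective.  As in the file for STATEMENT 10, a `U`-admissible
blow-up is encoded by its center (a closed subscheme disjoint from `U`) and the universal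
property of blow-ups.
-/

open AlgebraicGeometry CategoryTheory CategoryTheory.Limits

/-- An open subset `U` of a scheme `S` is schematically dense if all the restriction maps
`O_S(V) → O_S(V ⊓ U)` are injective. -/
def SchematicallyDense (S : Scheme) (U : S.Opens) : Prop :=
  ∀ V : S.Opens,
    Function.Injective (S.presheaf.map (homOfLE (inf_le_left : V ⊓ U ≤ V)).op)

/-- A closed immersion is an effective Cartier divisor if at each point of its image the
kernel of the map on stalks is generated by a single nonzerodivisor. -/
def IsEffectiveCartierDivisor {D Y : Scheme} (i : D ⟶ Y) : Prop :=
  IsClosedImmersion i ∧ ∀ d : D,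
    ∃ r : Y.presheaf.stalk (i.base d), r ∈ nonZeroDivisors (Y.presheaf.stalk (i.base d)) ∧
      RingHom.ker (i.stalkMap d).hom = Ideal.span {r}

/-- A `U`-admissible blow-up of a scheme `S`: the blow-up of a closed subscheme
(center) `Z ↪ S` disjoint from `U`, characterized by the universal property of blow-ups. -/
structure AdmissibleBlowup (S : Scheme) (U : S.Opens) where
  total : Scheme
  π : total ⟶ S
  center : Scheme
  ι : center ⟶ S
  isClosedImmersion : IsClosedImmersion ι
  admissible : ∀ z : center, ι.base z ∉ U
  cartier : IsEffectiveCartierDivisor (pullback.snd ι π)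
  universal : ∀ {Y : Scheme} (f : Y ⟶ S),
    IsEffectiveCartierDivisor (pullback.snd ι f) → ∃! g : Y ⟶ total, g ≫ π = f

/-!
Over the complement `W` of the center the blow-up is an isomorphism (by the universal property,
since pulling the center back to anything lying over `W` gives the empty divisor), so `π⁻¹ U` is
schematically dense in `π⁻¹ W`. In turn `π⁻¹ W` is the complement of the exceptional divisor,
which is schematically dense: near a point of the divisor there is a function `a` with
nonzerodivisor germ vanishing on the divisor, and a section vanishing on `D(a)` is killed by a
power of `a`. Schematic density is transitive.
-/

section

variable {X Y : Scheme}

lemma presheaf_map_homOfLE_map_homOfLE {U V W : X.Opens} (h₁ : U ≤ V) (h₂ : V ≤ W)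
    (s : Γ(X, W)) : X.presheaf.map (homOfLE h₁).op (X.presheaf.map (homOfLE h₂).op s) =
      X.presheaf.map (homOfLE (h₁.trans h₂)).op s :=
  TopCat.Presheaf.restrict_restrict h₁ h₂ s

lemma schematicallyDense_iff_forall_eq_zero {U : X.Opens} :
    SchematicallyDense X U ↔ ∀ (V : X.Opens) (s : Γ(X, V)),
      X.presheaf.map (homOfLE (inf_le_left : V ⊓ U ≤ V)).op s = 0 → s = 0 :=
  forall_congr' fun _ ↦ injective_iff_map_eq_zero _

lemma SchematicallyDense.app_eq_zero {U : Y.Opens} (f : X ⟶ Y)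
    (hU : SchematicallyDense X (f ⁻¹ᵁ U)) {V : Y.Opens} (s : Γ(Y, V))
    (hs : Y.presheaf.map (homOfLE (inf_le_left : V ⊓ U ≤ V)).op s = 0) : f.app V s = 0 := by
  refine schematicallyDense_iff_forall_eq_zero.mp hU (f ⁻¹ᵁ V) _ ?_
  have := ConcreteCategory.congr_hom (f.naturality (homOfLE (inf_le_left : V ⊓ U ≤ V)).op) s
  rw [CommRingCat.comp_apply, CommRingCat.comp_apply, hs, map_zero] at this
  exact this.symm

lemma SchematicallyDense.of_preimage_ι {U W : X.Opens} (hW : SchematicallyDense X W)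
    (hU : SchematicallyDense W.toScheme (W.ι ⁻¹ᵁ U)) : SchematicallyDense X U := by
  refine schematicallyDense_iff_forall_eq_zero.mpr fun V s hs ↦
    schematicallyDense_iff_forall_eq_zero.mp hW V s ?_
  have hle : V ⊓ W ≤ W.ι ''ᵁ W.ι ⁻¹ᵁ V := by
    rw [Scheme.Hom.image_preimage_eq_opensRange_inf, Scheme.Opens.opensRange_ι, inf_comm]
  have hs' : X.presheaf.map (homOfLE (W.ι.image_preimage_le V)).op s = 0 :=
    hU.app_eq_zero W.ι s hs
  rw [← presheaf_map_homOfLE_map_homOfLE hle (W.ι.image_preimage_le V), hs', map_zero]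

lemma SchematicallyDense.preimage {U : Y.Opens} (hU : SchematicallyDense Y U) (g : X ⟶ Y)
    [IsOpenImmersion g] : SchematicallyDense X (g ⁻¹ᵁ U) := by
  refine schematicallyDense_iff_forall_eq_zero.mpr fun V s hs ↦ ?_
  have hle : g ''ᵁ V ⊓ U ≤ g ''ᵁ (V ⊓ g ⁻¹ᵁ U) := by
    rintro _ ⟨⟨x, hxV, rfl⟩, hxU⟩
    exact ⟨x, ⟨hxV, hxU⟩, rfl⟩
  have hs' := congrArg (g.appIso _).inv hs
  rw [← CommRingCat.comp_apply, Scheme.Hom.appIso_inv_naturality, CommRingCat.comp_apply,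
    map_zero] at hs'
  have ht : (g.appIso V).inv s = 0 := by
    refine schematicallyDense_iff_forall_eq_zero.mp hU _ _ ?_
    rw [← presheaf_map_homOfLE_map_homOfLE hle (g.image_mono inf_le_left)]
    exact (congrArg _ hs').trans (map_zero _)
  simpa using congrArg (g.appIso V).hom ht

def complementOfRange (i : X ⟶ Y) [IsClosedImmersion i] : Y.Opens :=
  ⟨(Set.range i.base)ᶜ, i.isClosedEmbedding.isClosed_range.isOpen_compl⟩

lemma preimage_complementOfRange {Z : Scheme} (i : Z ⟶ Y) [IsClosedImmersion i] (f : X ⟶ Y) :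
    f ⁻¹ᵁ complementOfRange i = complementOfRange (pullback.snd i f) := by
  ext x
  simp [complementOfRange, Scheme.Pullback.range_snd]

lemma isEffectiveCartierDivisor_pullback_snd {Z : Scheme} (i : Z ⟶ Y) [IsClosedImmersion i]
    (f : X ⟶ Y) (hf : Set.range f.base ⊆ complementOfRange i) :
    IsEffectiveCartierDivisor (pullback.snd i f) := by
  refine ⟨inferInstance, fun d ↦ absurd ?_
    (hf ⟨_, rfl⟩ : f.base ((pullback.snd i f).base d) ∈ complementOfRange i)⟩
  exact ⟨(pullback.fst i f).base d, by
    rw [← Scheme.Hom.comp_apply, pullback.condition, Scheme.Hom.comp_apply]⟩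

attribute [instance] AdmissibleBlowup.isClosedImmersion

namespace AdmissibleBlowup

variable {S : Scheme} {U : S.Opens} (B : AdmissibleBlowup S U)

lemma existsUnique_lift (f : X ⟶ S) (hf : Set.range f.base ⊆ complementOfRange B.ι) :
    ∃! g : X ⟶ B.total, g ≫ B.π = f :=
  B.universal f (isEffectiveCartierDivisor_pullback_snd B.ι f hf)

lemma isIso_resLE :
    IsIso (B.π.resLE (complementOfRange B.ι) (B.π ⁻¹ᵁ complementOfRange B.ι) le_rfl) := by
  set W := complementOfRange B.ι
  set q := B.π.resLE W (B.π ⁻¹ᵁ W) le_rfl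
  have hq : q ≫ W.ι = (B.π ⁻¹ᵁ W).ι ≫ B.π := Scheme.Hom.resLE_comp_ι _ _
  obtain ⟨h, hh, -⟩ := B.existsUnique_lift W.ι (by rw [Scheme.Opens.range_ι])
  have hrange : Set.range h.base ⊆ Set.range (B.π ⁻¹ᵁ W).ι.base := by
    rintro _ ⟨y, rfl⟩
    rw [Scheme.Opens.range_ι]
    show (h ≫ B.π).base y ∈ W
    rw [hh]
    exact y.2
  set h' := IsOpenImmersion.lift (B.π ⁻¹ᵁ W).ι h hrange
  have hfac : h' ≫ (B.π ⁻¹ᵁ W).ι = h := IsOpenImmersion.lift_fac _ _ _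
  obtain ⟨k, -, huniq⟩ := B.existsUnique_lift ((B.π ⁻¹ᵁ W).ι ≫ B.π) (by
    rintro _ ⟨y, rfl⟩
    exact y.2)
  refine ⟨h', ?_, ?_⟩
  · -- both `q ≫ h` and the inclusion of `π⁻¹ W` lift `(π⁻¹ W).ι ≫ π`
    rw [← cancel_mono (B.π ⁻¹ᵁ W).ι, Category.assoc, hfac, Category.id_comp]
    exact (huniq _ (by dsimp only; rw [Category.assoc, hh, hq])).trans (huniq _ rfl).symm
  · rw [← cancel_mono W.ι, Category.assoc, hq, ← Category.assoc, hfac, hh, Category.id_comp]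

end AdmissibleBlowup

lemma basicOpen_le_complementOfRange {D : Scheme} (E : D ⟶ X) [IsClosedImmersion E]
    {A : X.Opens} {a : Γ(X, A)} (ha : E.app A a = 0) :
    X.basicOpen a ≤ complementOfRange E := by
  rintro _ hy ⟨d, rfl⟩
  have hd : d ∈ E ⁻¹ᵁ X.basicOpen a := hy
  rw [Scheme.preimage_basicOpen, ha, Scheme.basicOpen_zero] at hd
  exact hd

lemma germ_eq_zero_of_map_basicOpen_eq_zero {A : X.Opens} (hA : IsAffineOpen A) {a s : Γ(X, A)}
    (hs : X.presheaf.map (homOfLE (X.basicOpen_le a)).op s = 0) {x : X} (hx : x ∈ A)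
    (ha : X.presheaf.germ A x hx a ∈ nonZeroDivisors (X.presheaf.stalk x)) :
    X.presheaf.germ A x hx s = 0 := by
  obtain ⟨n, hn⟩ := exists_pow_mul_eq_zero_of_res_basicOpen_eq_zero_of_isAffineOpen X hA s a hs
  refine (mul_left_mem_nonZeroDivisors_eq_zero_iff (pow_mem ha n)).mp ?_
  rw [← map_pow, ← map_mul, hn, map_zero]

lemma exists_isUnit_germ_app_mul_eq_zero {D : Scheme} (E : D ⟶ X) [IsClosedImmersion E]
    {A : X.Opens} (hA : IsAffineOpen A) {d : D} (hd : E.base d ∈ A) {b : Γ(X, A)}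
    (hb : E.stalkMap d (X.presheaf.germ A _ hd b) = 0) :
    ∃ c : Γ(X, A), IsUnit (X.presheaf.germ A _ hd c) ∧ E.app A (c * b) = 0 := by
  rw [Scheme.Hom.germ_stalkMap_apply] at hb
  have hA' : IsAffineOpen (E ⁻¹ᵁ A) := hA.preimage E
  let := D.presheaf.algebra_section_stalk (⟨d, hd⟩ : E ⁻¹ᵁ A)
  have := hA'.isLocalization_stalk ⟨d, hd⟩
  obtain ⟨m, hm⟩ := (IsLocalization.map_eq_zero_iff
    (hA'.primeIdealOf ⟨d, hd⟩).asIdeal.primeCompl _ _).mp hb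
  obtain ⟨c, hc⟩ := E.app_surjective A hA m
  refine ⟨c, isUnit_of_map_unit (E.stalkMap d).hom _ ?_, by rw [map_mul, hc, hm]⟩
  rw [Scheme.Hom.germ_stalkMap_apply, hc]
  exact (IsLocalization.AtPrime.isUnit_to_map_iff _ _ (m : Γ(D, E ⁻¹ᵁ A))).mpr m.2

lemma exists_germ_mem_nonZeroDivisors_app_eq_zero {D : Scheme} (E : D ⟶ X)
    [IsClosedImmersion E] {A : X.Opens} (hA : IsAffineOpen A) {d : D} (hd : E.base d ∈ A)
    {r : X.presheaf.stalk (E.base d)} (hr : r ∈ nonZeroDivisors _) (hrE : E.stalkMap d r = 0) :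
    ∃ a : Γ(X, A), X.presheaf.germ A _ hd a ∈ nonZeroDivisors _ ∧ E.app A a = 0 := by
  let := X.presheaf.algebra_section_stalk (⟨E.base d, hd⟩ : A)
  have := hA.isLocalization_stalk ⟨E.base d, hd⟩
  obtain ⟨⟨b, g⟩, hbg⟩ :=
    IsLocalization.surj (hA.primeIdealOf ⟨E.base d, hd⟩).asIdeal.primeCompl r
  have hg : IsUnit (X.presheaf.germ A _ hd g) := IsLocalization.map_units _ g
  have hb : X.presheaf.germ A _ hd b = r * X.presheaf.germ A _ hd g := hbg.symm
  obtain ⟨c, hc, hcb⟩ := exists_isUnit_germ_app_mul_eq_zero E hA hd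
    (b := b) (by rw [hb, map_mul, hrE, zero_mul])
  refine ⟨c * b, ?_, hcb⟩
  rw [map_mul, hb, mul_comm r, ← mul_assoc]
  exact mul_mem (hc.mul hg).mem_nonZeroDivisors hr

lemma IsEffectiveCartierDivisor.schematicallyDense_complementOfRange {D : Scheme} {E : D ⟶ X}
    [IsClosedImmersion E] (hE : IsEffectiveCartierDivisor E) :
    SchematicallyDense X (complementOfRange E) := by
  refine schematicallyDense_iff_forall_eq_zero.mpr fun V s hs ↦
    TopCat.Presheaf.section_ext X.sheaf V s 0 fun x hxV ↦
      (?_ : X.presheaf.germ V x hxV s = 0).trans (map_zero _).symm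
  by_cases hxE : x ∈ complementOfRange E
  · rw [← TopCat.Presheaf.germ_res_apply _ (homOfLE inf_le_left) x ⟨hxV, hxE⟩, hs, map_zero]
  obtain ⟨d, rfl⟩ := not_not.mp hxE
  obtain ⟨r, hr, hker⟩ := hE.2 d
  have hrE : E.stalkMap d r = 0 := by
    rw [← RingHom.mem_ker, hker]
    exact Ideal.mem_span_singleton_self r
  obtain ⟨_, ⟨A, hA, rfl⟩, hxA, hAV : A ≤ V⟩ :=
    X.isBasis_affineOpens.exists_subset_of_mem_open hxV V.2
  obtain ⟨a, ha, hEa⟩ := exists_germ_mem_nonZeroDivisors_app_eq_zero E hA hxA hr hrE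
  have hDa : X.basicOpen a ≤ V ⊓ complementOfRange E :=
    le_inf ((X.basicOpen_le a).trans hAV) (basicOpen_le_complementOfRange E hEa)
  rw [← TopCat.Presheaf.germ_res_apply _ (homOfLE hAV) _ hxA]
  refine germ_eq_zero_of_map_basicOpen_eq_zero hA ?_ hxA ha
  rw [presheaf_map_homOfLE_map_homOfLE, ← presheaf_map_homOfLE_map_homOfLE hDa inf_le_left,
    hs, map_zero]

end

theorem preimage_schematically_dense_of_admissible_blowup_general
    (S : Scheme) (U : S.Opens)
    (hU : SchematicallyDense S U)
    (B : AdmissibleBlowup S U) :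
    SchematicallyDense B.total (B.π ⁻¹ᵁ U) := by
  have hW : SchematicallyDense B.total (B.π ⁻¹ᵁ complementOfRange B.ι) := by
    rw [preimage_complementOfRange]
    exact B.cartier.schematicallyDense_complementOfRange
  refine hW.of_preimage_ι ?_
  have := B.isIso_resLE
  have hUW := (hU.preimage (complementOfRange B.ι).ι).preimage
    (B.π.resLE (complementOfRange B.ι) (B.π ⁻¹ᵁ complementOfRange B.ι) le_rfl)
  rwa [← Scheme.Hom.comp_preimage, Scheme.Hom.resLE_comp_ι, Scheme.Hom.comp_preimage] at hUW

theorem preimage_schematically_dense_of_admissible_blowup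
    (S : Scheme) [IsLocallyNoetherian S] (U : S.Opens)
    (hU : SchematicallyDense S U)
    (B : AdmissibleBlowup S U) :
    SchematicallyDense B.total (B.π ⁻¹ᵁ U) :=
  preimage_schematically_dense_of_admissible_blowup_general S U hU B
end
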